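/- (Dyadic Carleson Lemma in ℝ^d) Let D be a dyadic grid in ℝ^d and S a finite index set. Suppose {λ_I^ε : I ∈ D, ε ∈ S} are nonnegative reals satisfying the Carleson condition sup_{J ∈ D} (1/|J|) Σ_{I ⊆ J, I ∈ D} Σ_{ε ∈ S} λ_I^ε ≤ C < ∞. Then for any nonnegative sequence {a_I}_{I ∈ D}, Σ_{I ∈ D} Σ_{ε ∈ S} a_I λ_I^ε ≤ C ∫_{ℝ^d} a*(x) dx, where a*(x) = sup_{I ∈ D, I ∋ x} a_I. -/

import Mathlib

open MeasureTheory
open scoped ENNReal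

/-- The dyadic cube of generation `k` indexed by `m ∈ ℤ^d`:
`∏_i [m_i 2^{-k}, (m_i + 1) 2^{-k})`. -/
def dCube (d : ℕ) (I : ℤ × (Fin d → ℤ)) : Set (Fin d → ℝ) :=
  Set.univ.pi fun i =>
    Set.Ico ((I.2 i : ℝ) * (2 : ℝ) ^ (-I.1)) (((I.2 i : ℝ) + 1) * (2 : ℝ) ^ (-I.1))

lemma ico_dyadic_subset {k l m n : ℤ} (hlk : l ≤ k) {x : ℝ}
    (h1 : x ∈ Set.Ico ((m:ℝ) * (2:ℝ)^(-k)) (((m:ℝ)+1) * (2:ℝ)^(-k)))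
    (h2 : x ∈ Set.Ico ((n:ℝ) * (2:ℝ)^(-l)) (((n:ℝ)+1) * (2:ℝ)^(-l))) :
    Set.Ico ((m:ℝ) * (2:ℝ)^(-k)) (((m:ℝ)+1) * (2:ℝ)^(-k)) ⊆
      Set.Ico ((n:ℝ) * (2:ℝ)^(-l)) (((n:ℝ)+1) * (2:ℝ)^(-l)) := by
  set q : ℤ := 2 ^ (k - l).toNat with hqdef
  have hq : (q:ℝ) = (2:ℝ)^(k-l) := by
    rw [hqdef]
    push_cast
    rw [← zpow_natCast (2:ℝ), Int.toNat_of_nonneg (sub_nonneg.2 hlk)]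
  have hpow : (2:ℝ)^(-l) = (q:ℝ) * (2:ℝ)^(-k) := by
    rw [hq, ← zpow_add₀ (two_ne_zero)]
    ring_nf
  have hk0 : (0:ℝ) < (2:ℝ)^(-k) := zpow_pos two_pos _
  -- m*2^{-k} < (n+1)*2^{-l}
  have A : (m:ℝ) * (2:ℝ)^(-k) < ((n:ℝ)+1) * (2:ℝ)^(-l) := lt_of_le_of_lt h1.1 h2.2
  have B : (n:ℝ) * (2:ℝ)^(-l) < ((m:ℝ)+1) * (2:ℝ)^(-k) := lt_of_le_of_lt h2.1 h1.2
  rw [hpow] at A B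
  have A' : (m:ℝ) < ((n:ℝ)+1) * q := by
    have := (mul_lt_mul_iff_left₀ hk0).1 (by linarith [A] : (m:ℝ) * (2:ℝ)^(-k) < (((n:ℝ)+1) * q) * (2:ℝ)^(-k))
    exact this
  have B' : (n:ℝ) * q < (m:ℝ)+1 := by
    have := (mul_lt_mul_iff_left₀ hk0).1 (by linarith [B] : ((n:ℝ) * q) * (2:ℝ)^(-k) < ((m:ℝ)+1) * (2:ℝ)^(-k))
    exact this
  have A'' : m + 1 ≤ (n+1) * q := by
    have : (m:ℝ) < (((n+1)*q : ℤ) : ℝ) := by push_cast; linarith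
    exact_mod_cast this
  have B'' : n * q ≤ m := by
    have h2' : ((n*q : ℤ) : ℝ) < ((m+1 : ℤ) : ℝ) := by push_cast; linarith
    have h3 : (n*q : ℤ) < m+1 := by exact_mod_cast h2'
    omega
  apply Set.Ico_subset_Ico
  · rw [hpow]
    have : ((n*q:ℤ):ℝ) ≤ (m:ℝ) := by exact_mod_cast B''
    push_cast at this
    nlinarith
  · rw [hpow]
    have : ((m:ℝ)+1) ≤ (((n+1)*q:ℤ):ℝ) := by exact_mod_cast A''
    push_cast at this
    nlinarith


lemma dCube_subset {d : ℕ} {I J : ℤ × (Fin d → ℤ)} (hlk : J.1 ≤ I.1)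
    (h : (dCube d I ∩ dCube d J).Nonempty) : dCube d I ⊆ dCube d J := by
  obtain ⟨x, hxI, hxJ⟩ := h
  intro y hy
  intro i _
  exact ico_dyadic_subset hlk (hxI i (Set.mem_univ i)) (hxJ i (Set.mem_univ i))
    (hy i (Set.mem_univ i))

lemma measurableSet_dCube {d : ℕ} (I : ℤ × (Fin d → ℤ)) : MeasurableSet (dCube d I) :=
  MeasurableSet.univ_pi fun _ => measurableSet_Ico

open Classical in
lemma stepB {d : ℕ} (Lam : ℤ × (Fin d → ℤ) → ℝ≥0∞) (C : ℝ≥0∞)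
    (hCar : ∀ J : ℤ × (Fin d → ℤ),
      (∑' I : {I : ℤ × (Fin d → ℤ) // dCube d I ⊆ dCube d J}, Lam I.1)
        ≤ C * volume (dCube d J))
    (G : Finset (ℤ × (Fin d → ℤ))) :
    ∑ I ∈ G, Lam I ≤ C * volume (⋃ I ∈ G, dCube d I) := by
  induction G using Finset.strongInduction with
  | _ G IH =>
    rcases G.eq_empty_or_nonempty with rfl | hne
    · simp
    · obtain ⟨U, hU, hUmin⟩ := G.exists_min_image (fun I => I.1) hne
      set G₁ := G.filter (fun J => dCube d J ⊆ dCube d U) with hG₁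
      set G₂ := G.filter (fun J => ¬ dCube d J ⊆ dCube d U) with hG₂
      have hUG₁ : U ∈ G₁ := Finset.mem_filter.2 ⟨hU, subset_rfl⟩
      have hdisj : ∀ J ∈ G₂, dCube d J ∩ dCube d U = ∅ := by
        intro J hJ
        rw [Finset.mem_filter] at hJ
        by_contra hne'
        exact hJ.2 (dCube_subset (hUmin J hJ.1) (Set.nonempty_iff_ne_empty.2 hne'))
      have hG₂ss : G₂ ⊂ G := by
        refine Finset.ssubset_iff_of_subset (Finset.filter_subset _ _) |>.2 ⟨U, hU, ?_⟩
        intro hUm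
        exact (Finset.mem_filter.1 hUm).2 subset_rfl
      have split : ∑ I ∈ G, Lam I = ∑ I ∈ G₁, Lam I + ∑ I ∈ G₂, Lam I :=
        (Finset.sum_filter_add_sum_filter_not G _ _).symm
      -- bound on G₁ via Carleson
      have hb1 : ∑ I ∈ G₁, Lam I ≤ C * volume (dCube d U) := by
        refine le_trans ?_ (hCar U)
        have : ∑ I ∈ G₁, Lam I = ∑ I ∈ G₁.attach, Lam I.1 := (Finset.sum_attach _ _).symm
        rw [this]
        have hmem : ∀ x : {I // I ∈ G₁}, dCube d x.1 ⊆ dCube d U := by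
          intro x
          exact (Finset.mem_filter.1 x.2).2
        have hinj : Function.Injective
            (fun x : {I // I ∈ G₁} => (⟨x.1, hmem x⟩ : {I // dCube d I ⊆ dCube d U})) := by
          intro x y h
          exact Subtype.ext (congrArg (fun z : {I // dCube d I ⊆ dCube d U} => z.1) h)
        have := ENNReal.sum_le_tsum (f := fun I : {I // dCube d I ⊆ dCube d U} => Lam I.1)
          (G₁.attach.map ⟨_, hinj⟩)
        rw [Finset.sum_map] at this
        exact this
      have hb2 : ∑ I ∈ G₂, Lam I ≤ C * volume (⋃ I ∈ G₂, dCube d I) := IH G₂ hG₂ss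
      calc ∑ I ∈ G, Lam I ≤ C * volume (dCube d U) + C * volume (⋃ I ∈ G₂, dCube d I) := by
            rw [split]; exact add_le_add hb1 hb2
        _ = C * (volume (dCube d U) + volume (⋃ I ∈ G₂, dCube d I)) := (mul_add _ _ _).symm
        _ = C * volume (dCube d U ∪ ⋃ I ∈ G₂, dCube d I) := by
            congr 1
            refine (measure_union ?_ ?_).symm
            · rw [Set.disjoint_iff_inter_eq_empty, Set.inter_comm, Set.iUnion₂_inter]
              simp only [Set.iUnion_eq_empty]
              intro J hJ
              exact hdisj J hJ
            · exact MeasurableSet.biUnion G₂.countable_toSet fun J _ => measurableSet_dCube J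
        _ ≤ C * volume (⋃ I ∈ G, dCube d I) := by
            refine mul_le_mul_right (measure_mono ?_) C
            refine Set.union_subset ?_ ?_
            · exact Set.subset_biUnion_of_mem hU
            · exact Set.iUnion₂_mono' fun J hJ => ⟨J, Finset.mem_of_mem_filter J hJ, subset_rfl⟩

open Classical in
lemma stepC {d : ℕ} (Lam : ℤ × (Fin d → ℤ) → ℝ≥0∞) (C : ℝ≥0∞)
    (hB : ∀ G : Finset (ℤ × (Fin d → ℤ)),
      ∑ I ∈ G, Lam I ≤ C * volume (⋃ I ∈ G, dCube d I)) :
    ∀ (F : Finset (ℤ × (Fin d → ℤ))) (a : ℤ × (Fin d → ℤ) → ℝ≥0∞),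
      ∑ I ∈ F, a I * Lam I
        ≤ C * ∫⁻ x, (F.filter (fun I => x ∈ dCube d I)).sup a ∂volume := by
  intro F
  induction F using Finset.strongInduction with
  | _ F IH =>
    intro a
    rcases F.eq_empty_or_nonempty with rfl | hne
    · simp
    · set t := F.inf' hne a with htdef
      have ht_le : ∀ I ∈ F, t ≤ a I := fun I hI => Finset.inf'_le a hI
      obtain ⟨I0, hI0F, hI0⟩ := F.exists_mem_eq_inf' hne a
      set F' := F.filter (fun I => t < a I) with hF'
      have hss : F' ⊂ F := by
        refine ⟨Finset.filter_subset _ _, fun hsub => ?_⟩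
        have := (Finset.mem_filter.1 (hsub hI0F)).2
        rw [← hI0] at this
        exact lt_irrefl _ this
      set a' : ℤ × (Fin d → ℤ) → ℝ≥0∞ := fun I => a I - t with ha'
      set E := ⋃ I ∈ F, dCube d I with hE
      have hEm : MeasurableSet E :=
        MeasurableSet.biUnion F.countable_toSet fun J _ => measurableSet_dCube J
      set g : (Fin d → ℝ) → ℝ≥0∞ := fun x => (F.filter (fun I => x ∈ dCube d I)).sup a
        with hg
      set g' : (Fin d → ℝ) → ℝ≥0∞ := fun x => (F'.filter (fun I => x ∈ dCube d I)).sup a'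
        with hg'
      set h : (Fin d → ℝ) → ℝ≥0∞ := E.indicator (fun _ => t) with hh
      have hmeas : Measurable h := measurable_const.indicator hEm
      have hpt : ∀ x, h x + g' x ≤ g x := by
        intro x
        by_cases hx : x ∈ E
        · have hxE := Set.mem_iUnion₂.1 hx
          obtain ⟨I1, hI1F, hx1⟩ := hxE
          have hgt : t ≤ g x :=
            le_trans (ht_le I1 hI1F) (Finset.le_sup (Finset.mem_filter.2 ⟨hI1F, hx1⟩))
          have hhx : h x = t := Set.indicator_of_mem hx _
          rw [hhx]
          rcases (F'.filter (fun I => x ∈ dCube d I)).eq_empty_or_nonempty with he | hne2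
          · rw [hg']
            simp only [he, Finset.sup_empty]
            simpa using hgt
          · obtain ⟨I2, hI2, hsup⟩ := Finset.exists_mem_eq_sup _ hne2 a'
            have hI2F' : I2 ∈ F' := (Finset.mem_filter.1 hI2).1
            have hI2F : I2 ∈ F := Finset.mem_of_mem_filter _ hI2F'
            have heq : t + a' I2 = a I2 := add_tsub_cancel_of_le (ht_le I2 hI2F)
            have hgx : a I2 ≤ g x :=
              Finset.le_sup (Finset.mem_filter.2 ⟨hI2F, (Finset.mem_filter.1 hI2).2⟩)
            have hgx' : g' x = a' I2 := hsup
            rw [hgx', heq]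
            exact hgx
        · have hhx : h x = 0 := Set.indicator_of_notMem hx _
          rw [hhx, zero_add]
          refine Finset.sup_le fun I hI => ?_
          have hIF : I ∈ F := Finset.mem_of_mem_filter _ ((Finset.mem_filter.1 hI).1)
          exact le_trans (tsub_le_self)
            (Finset.le_sup (Finset.mem_filter.2 ⟨hIF, (Finset.mem_filter.1 hI).2⟩))
      calc ∑ I ∈ F, a I * Lam I = ∑ I ∈ F, (t + a' I) * Lam I := by
            refine Finset.sum_congr rfl fun I hI => ?_
            rw [ha']
            simp only []
            rw [add_tsub_cancel_of_le (ht_le I hI)]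
        _ = ∑ I ∈ F, t * Lam I + ∑ I ∈ F, a' I * Lam I := by
            rw [← Finset.sum_add_distrib]
            exact Finset.sum_congr rfl fun I _ => add_mul _ _ _
        _ = t * ∑ I ∈ F, Lam I + ∑ I ∈ F', a' I * Lam I := by
            rw [Finset.mul_sum]
            congr 1
            refine (Finset.sum_subset (Finset.filter_subset _ _) ?_).symm
            intro I hI hIn
            have : ¬ t < a I := fun hlt => hIn (Finset.mem_filter.2 ⟨hI, hlt⟩)
            have : a' I = 0 := tsub_eq_zero_of_le (not_lt.1 this)
            rw [this, zero_mul]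
        _ ≤ t * (C * volume E) + C * ∫⁻ x, g' x ∂volume := by
            refine add_le_add (mul_le_mul_right ?_ t) (IH F' hss a')
            simpa [hE] using hB F
        _ = C * (∫⁻ x, h x ∂volume) + C * ∫⁻ x, g' x ∂volume := by
            rw [hh, lintegral_indicator_const hEm]
            ring
        _ = C * ∫⁻ x, (h x + g' x) ∂volume := by
            rw [← mul_add, ← lintegral_add_left hmeas]
        _ ≤ C * ∫⁻ x, g x ∂volume := mul_le_mul_right (lintegral_mono hpt) C

/-- Dyadic Carleson Lemma in `ℝ^d`: if `{λ_I^ε}` satisfies the Carleson condition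
`Σ_{I ⊆ J} Σ_ε λ_I^ε ≤ C |J|` for every dyadic cube `J`, then for any nonnegative
sequence `{a_I}`, `Σ_I Σ_ε a_I λ_I^ε ≤ C ∫ a*`, where `a*(x) = sup_{I ∋ x} a_I`. -/
theorem stmt8 {d : ℕ} (S : Type) [Fintype S]
    (lam : ℤ × (Fin d → ℤ) → S → ℝ≥0∞) (C : ℝ≥0∞)
    (hCar : ∀ J : ℤ × (Fin d → ℤ),
      (∑' I : {I : ℤ × (Fin d → ℤ) // dCube d I ⊆ dCube d J}, ∑ ε : S, lam I.1 ε)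
        ≤ C * volume (dCube d J))
    (a : ℤ × (Fin d → ℤ) → ℝ≥0∞) :
    (∑' I : ℤ × (Fin d → ℤ), a I * ∑ ε : S, lam I ε)
      ≤ C * ∫⁻ x, ⨆ (I : ℤ × (Fin d → ℤ)) (_ : x ∈ dCube d I), a I ∂volume := by
  classical
  set Lam : ℤ × (Fin d → ℤ) → ℝ≥0∞ := fun I => ∑ ε : S, lam I ε with hLam
  have hB := stepB Lam C hCar
  have hC := stepC Lam C hB
  rw [ENNReal.tsum_eq_iSup_sum]
  refine iSup_le fun F => ?_
  refine le_trans (hC F a) (mul_le_mul_right (lintegral_mono fun x => ?_) C)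
  refine Finset.sup_le fun I hI => ?_
  exact le_iSup₂ (f := fun (I : ℤ × (Fin d → ℤ)) (_ : x ∈ dCube d I) => a I) I
    (Finset.mem_filter.1 hI).2
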